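/- arXiv:1204.1574 — 2 statements merged into one kernel-verified Lean document; each statement's English description precedes it below -/
import Mathlib

section
/- Let p be an odd prime, let n ≥ 1, and let a₁, a₂, …, a_n be positive integers with T := a₁ + a₂ + ⋯ + a_n ≤ 2(p−1). Consider the rational number S := Σ_{j=0}^{p−1} [ Π_{i=1}^{n} (j+1)_{a_i} ] · [ 1 + j · Σ_{i=1}^{n} ( H^{(1)}_{a_i + j} − H^{(1)}_{j} ) ]. Viewed in ℚ_p, S ∈ pℤ_p if T < 2(p−1), and S − 1 ∈ pℤ_p if T = 2(p−1). -/
/-- The generalized harmonic sum `H⁽ⁱ⁾_n = ∑_{j=1}^{n} 1/jⁱ`. -/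
def harmonic' (i n : ℕ) : ℚ := ∑ j ∈ Finset.Icc 1 n, 1 / (j : ℚ) ^ i

/-- The rising factorial `(a)ₖ = a(a+1)⋯(a+k-1)` in `ℚ`. -/
def risingFacQ (a : ℚ) (k : ℕ) : ℚ := ∏ t ∈ Finset.range k, (a + t)

/-!
Let `G(x) = x ∏ᵢ (x + 1)_{aᵢ} ∈ ℤ[x]`, a monic polynomial of degree `1 + T`. Logarithmic
differentiation shows that the `j`-th summand of `S` is `G'(j)`, so `S` is an integer and
`S ≡ ∑_{x ∈ 𝔽_p} G'(x) (mod p)`. Over a finite field with `q` elements, `∑ₓ xᵐ` is `-1` when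
`m` is a positive multiple of `q - 1` and `0` otherwise. As `deg G' ≤ 2(q - 1)`, only the
monomials `x^(q-1)` and `x^(2(q-1))` of `G'` survive; writing `c_k` for the coefficients of `G`,
they contribute `-q c_q = 0` and `-(2q - 1) c_{2q-1} = c_{2q-1}`. Hence `S ≡ c_{2p-1} (mod p)`,
which is the leading coefficient `1` if `T = 2(p - 1)` and `0` if `T < 2(p - 1)`.
-/

open Polynomial Finset

theorem harmonic'_succ (i n : ℕ) :
    harmonic' i (n + 1) = harmonic' i n + 1 / ((n : ℚ) + 1) ^ i := by
  rw [harmonic', sum_Icc_succ_top (by omega), harmonic']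
  push_cast; rfl

theorem harmonic'_one_add_sub (k j : ℕ) :
    harmonic' 1 (k + j) - harmonic' 1 j = ∑ t ∈ range k, 1 / ((j : ℚ) + (t + 1)) := by
  induction k with
  | zero => simp
  | succ k ih =>
    rw [Nat.add_right_comm, harmonic'_succ, sum_range_succ, ← ih]
    push_cast; ring

theorem Polynomial.eval_derivative_prod_of_ne_zero {K ι : Type*} [Field K] (s : Finset ι)
    (f : ι → K[X]) {x : K} (hx : ∀ i ∈ s, (f i).eval x ≠ 0) :
    (derivative (∏ i ∈ s, f i)).eval x =
      (∏ i ∈ s, (f i).eval x) * ∑ i ∈ s, (derivative (f i)).eval x / (f i).eval x := by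
  classical
  induction s using Finset.induction_on with
  | empty => simp
  | insert i s hi ih =>
    rw [prod_insert hi, prod_insert hi, sum_insert hi, derivative_mul, eval_add, eval_mul,
      eval_mul, eval_prod, ih fun j hj => hx j (mem_insert_of_mem hj)]
    have hfi := hx i (mem_insert_self i s)
    field_simp

noncomputable def risingPoly (R : Type*) [CommRing R] (k : ℕ) : R[X] :=
  ∏ t ∈ range k, (X + C ((t + 1 : ℕ) : R))

theorem monic_risingPoly (R : Type*) [CommRing R] (k : ℕ) : (risingPoly R k).Monic :=
  monic_prod_of_monic _ _ fun _ _ => monic_X_add_C _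

theorem natDegree_risingPoly (R : Type*) [CommRing R] [Nontrivial R] (k : ℕ) :
    (risingPoly R k).natDegree = k := by
  simp only [risingPoly, natDegree_prod_of_monic _ _ fun _ _ => monic_X_add_C _,
    natDegree_X_add_C, sum_const, card_range, smul_eq_mul, mul_one]

theorem eval_risingPoly (x : ℚ) (k : ℕ) : (risingPoly ℚ k).eval x = risingFacQ (x + 1) k := by
  simp only [risingPoly, risingFacQ, eval_prod, eval_add, eval_X, eval_C]
  push_cast
  ring_nf

theorem eval_derivative_risingPoly (k j : ℕ) :
    (derivative (risingPoly ℚ k)).eval (j : ℚ) =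
      (risingPoly ℚ k).eval (j : ℚ) * (harmonic' 1 (k + j) - harmonic' 1 j) := by
  have hne (t : ℕ) : (X + C ((t + 1 : ℕ) : ℚ)).eval (j : ℚ) ≠ 0 := by
    simp only [eval_add, eval_X, eval_C]
    positivity
  rw [risingPoly, eval_derivative_prod_of_ne_zero _ _ fun t _ => hne t, eval_prod,
    harmonic'_one_add_sub]
  simp

namespace FiniteField

variable {K : Type*} [Field K] [Fintype K]

theorem sum_pow_eq_ite (i : ℕ) :
    ∑ x : K, x ^ i = if i ≠ 0 ∧ Fintype.card K - 1 ∣ i then -1 else 0 := by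
  classical
  rcases eq_or_ne i 0 with rfl | hi
  · simp
  simp only [ne_eq, hi, not_false_eq_true, true_and, ← sum_pow_units K i]
  let e : Kˣ ↪ K := ⟨Units.val, Units.val_injective⟩
  have hzero (x : K) (hx : x ∉ univ.map e) : x ^ i = 0 := by
    obtain rfl : x = 0 := by
      by_contra h
      exact hx (mem_map.mpr ⟨Units.mk0 x h, mem_univ _, rfl⟩)
    exact zero_pow hi
  exact ((sum_subset (subset_univ _) fun x _ hx => hzero x hx).symm).trans (sum_map _ e _)

theorem sum_eval_derivative_of_natDegree_le {F : K[X]}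
    (hF : F.natDegree ≤ 2 * (Fintype.card K - 1) + 1) :
    ∑ x : K, (derivative F).eval x = F.coeff (2 * (Fintype.card K - 1) + 1) := by
  set q := Fintype.card K with hq_def
  have hq : 1 < q := Fintype.one_lt_card
  have hdeg : (derivative F).natDegree < 2 * (q - 1) + 1 :=
    (natDegree_derivative_le F).trans_lt (by omega)
  have hpow (m : ℕ) (hm : m ∈ range (2 * (q - 1) + 1)) (h1 : m ≠ q - 1) (h2 : m ≠ 2 * (q - 1)) :
      ∑ x : K, x ^ m = 0 := by
    rw [sum_pow_eq_ite, ← hq_def, if_neg]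
    rintro ⟨h0, k, rfl⟩
    have hk : k < 3 := Nat.lt_of_mul_lt_mul_left (a := q - 1) (by rw [mem_range] at hm; omega)
    interval_cases k <;> omega
  have hq1 : ((q - 1 : ℕ) : K) + 1 = 0 := by
    rw [← Nat.cast_add_one, Nat.sub_add_cancel hq.le, cast_card_eq_zero]
  have hq2 : ((2 * (q - 1) : ℕ) : K) + 1 = -1 := by
    have h : ((2 * (q - 1) + 1 + 1 : ℕ) : K) = 0 := by
      rw [show 2 * (q - 1) + 1 + 1 = 2 * q by omega, Nat.cast_mul, cast_card_eq_zero, mul_zero]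
    rw [eq_neg_iff_add_eq_zero]
    exact_mod_cast h
  calc ∑ x : K, (derivative F).eval x
      = ∑ m ∈ range (2 * (q - 1) + 1), (derivative F).coeff m * ∑ x : K, x ^ m := by
        simp_rw [eval_eq_sum_range' hdeg, mul_sum]
        exact sum_comm
    _ = (derivative F).coeff (q - 1) * (-1) + (derivative F).coeff (2 * (q - 1)) * (-1) := by
        rw [sum_eq_add_of_mem (q - 1) (2 * (q - 1)) (by simp; omega) (by simp) (by omega)
          fun m hm hne => by rw [hpow m hm hne.1 hne.2, mul_zero]]
        rw [sum_pow_eq_ite, sum_pow_eq_ite, if_pos ⟨by omega, dvd_rfl⟩,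
          if_pos ⟨by omega, dvd_mul_left _ _⟩]
    _ = F.coeff (2 * (q - 1) + 1) := by
        rw [coeff_derivative, coeff_derivative, hq1, hq2]; ring

end FiniteField

variable {ι : Type*} [Fintype ι]

noncomputable def xMulRisingProd (R : Type*) [CommRing R] (a : ι → ℕ) : R[X] :=
  X * ∏ i, risingPoly R (a i)

theorem map_xMulRisingProd {R S : Type*} [CommRing R] [CommRing S] (f : R →+* S) (a : ι → ℕ) :
    (xMulRisingProd R a).map f = xMulRisingProd S a := by
  simp [xMulRisingProd, risingPoly, Polynomial.map_prod]

theorem monic_xMulRisingProd (R : Type*) [CommRing R] (a : ι → ℕ) :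
    (xMulRisingProd R a).Monic :=
  monic_X.mul <| monic_prod_of_monic _ _ fun _ _ => monic_risingPoly R _

theorem natDegree_xMulRisingProd (R : Type*) [CommRing R] [Nontrivial R] (a : ι → ℕ) :
    (xMulRisingProd R a).natDegree = 1 + ∑ i, a i := by
  rw [xMulRisingProd, monic_X.natDegree_mul (monic_prod_of_monic _ _ fun _ _ =>
    monic_risingPoly R _), natDegree_X,
    natDegree_prod_of_monic _ _ fun _ _ => monic_risingPoly R _]
  simp [natDegree_risingPoly]

theorem eval_derivative_xMulRisingProd (a : ι → ℕ) (j : ℕ) :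
    (derivative (xMulRisingProd ℚ a)).eval (j : ℚ) =
      (∏ i, risingFacQ ((j : ℚ) + 1) (a i)) *
        (1 + (j : ℚ) * ∑ i, (harmonic' 1 (a i + j) - harmonic' 1 j)) := by
  have hne (k : ℕ) : (risingPoly ℚ k).eval (j : ℚ) ≠ 0 := by
    rw [eval_risingPoly, risingFacQ]; exact prod_ne_zero_iff.mpr fun t _ => by positivity
  rw [xMulRisingProd, derivative_mul, derivative_X, one_mul, eval_add, eval_mul, eval_X,
    eval_derivative_prod_of_ne_zero _ _ fun i _ => hne _, eval_prod]
  have hlog (k : ℕ) : (derivative (risingPoly ℚ k)).eval (j : ℚ) / (risingPoly ℚ k).eval (j : ℚ) =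
      harmonic' 1 (k + j) - harmonic' 1 j := by
    rw [eval_derivative_risingPoly, mul_div_cancel_left₀ _ (hne k)]
  rw [sum_congr rfl fun i _ => hlog (a i)]
  simp only [eval_risingPoly]
  ring

theorem ZMod.sum_range_natCast {p : ℕ} [NeZero p] {M : Type*} [AddCommMonoid M]
    (f : ZMod p → M) : ∑ j ∈ range p, f j = ∑ x : ZMod p, f x :=
  sum_nbij' Nat.cast ZMod.val (fun _ _ => mem_univ _) (fun x _ => mem_range.mpr x.val_lt)
    (fun _ hj => ZMod.val_cast_of_lt (mem_range.mp hj)) (fun x _ => ZMod.natCast_zmod_val x)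
    fun _ _ => rfl

theorem PadicInt.exists_intCast_eq_mul_of_intCast_zmod_eq_zero {p : ℕ} [Fact p.Prime] {N : ℤ}
    (h : (N : ZMod p) = 0) : ∃ z : ℤ_[p], (N : ℚ_[p]) = p * z := by
  obtain ⟨k, rfl⟩ := (ZMod.intCast_zmod_eq_zero_iff_dvd N p).mp h
  exact ⟨k, by push_cast; rfl⟩

theorem intCast_eval_derivative_xMulRisingProd (R : Type*) [CommRing R] (a : ι → ℕ) (j : ℕ) :
    (((derivative (xMulRisingProd ℤ a)).eval (j : ℤ) : ℤ) : R) =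
      (derivative (xMulRisingProd R a)).eval (j : R) := by
  rw [← map_xMulRisingProd (Int.castRingHom R), derivative_map, eval_natCast_map]
  simp

theorem intCast_sum_range_eval_derivative_xMulRisingProd (p : ℕ) [Fact p.Prime] (a : ι → ℕ)
    (ha : ∑ i, a i ≤ 2 * (p - 1)) :
    ((∑ j ∈ range p, (derivative (xMulRisingProd ℤ a)).eval (j : ℤ) : ℤ) : ZMod p) =
      (xMulRisingProd (ZMod p) a).coeff (2 * (p - 1) + 1) := by
  have hsum := FiniteField.sum_eval_derivative_of_natDegree_le (F := xMulRisingProd (ZMod p) a)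
    (by rw [natDegree_xMulRisingProd, ZMod.card]; omega)
  rw [ZMod.card] at hsum
  rw [← hsum, ← ZMod.sum_range_natCast, Int.cast_sum]
  exact sum_congr rfl fun j _ => intCast_eval_derivative_xMulRisingProd _ a j

theorem stmt4_general (p : ℕ) [hp : Fact p.Prime]
    (n : ℕ) (a : Fin n → ℕ)
    (S : ℚ)
    (hS : S = ∑ j ∈ Finset.range p,
        (∏ i, risingFacQ ((j : ℚ) + 1) (a i)) *
          (1 + (j : ℚ) * ∑ i, (harmonic' 1 (a i + j) - harmonic' 1 j))) :
    (∑ i, a i < 2 * (p - 1) → ∃ z : ℤ_[p], (S : ℚ_[p]) = (p : ℚ_[p]) * (z : ℚ_[p])) ∧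
    (∑ i, a i = 2 * (p - 1) → ∃ z : ℤ_[p], (S : ℚ_[p]) - 1 = (p : ℚ_[p]) * (z : ℚ_[p])) := by
  set N : ℤ := ∑ j ∈ range p, (derivative (xMulRisingProd ℤ a)).eval (j : ℤ)
  have hSN : S = N := by
    simp only [hS, N, Int.cast_sum, intCast_eval_derivative_xMulRisingProd,
      eval_derivative_xMulRisingProd]
  have hNmod (hT : ∑ i, a i ≤ 2 * (p - 1)) :=
    intCast_sum_range_eval_derivative_xMulRisingProd p a hT
  refine ⟨fun hlt => ?_, fun heq => ?_⟩
  · have hN : (N : ZMod p) = 0 := by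
      rw [hNmod hlt.le, coeff_eq_zero_of_natDegree_lt]
      rw [natDegree_xMulRisingProd]
      omega
    obtain ⟨z, hz⟩ := PadicInt.exists_intCast_eq_mul_of_intCast_zmod_eq_zero hN
    exact ⟨z, by rw [hSN]; exact_mod_cast hz⟩
  · have hN : ((N - 1 : ℤ) : ZMod p) = 0 := by
      rw [Int.cast_sub, hNmod heq.le, ← heq, add_comm, ← natDegree_xMulRisingProd (ZMod p),
        (monic_xMulRisingProd _ a).coeff_natDegree, Int.cast_one, sub_self]
    obtain ⟨z, hz⟩ := PadicInt.exists_intCast_eq_mul_of_intCast_zmod_eq_zero hN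
    exact ⟨z, by rw [hSN]; exact_mod_cast hz⟩

/-- Lemma 3.10: for an odd prime `p` and positive integers `a₁, …, a_n` with
`T = a₁ + ⋯ + a_n ≤ 2(p-1)`, the sum
`∑_{j=0}^{p-1} [∏ᵢ (j+1)_{aᵢ}] [1 + j ∑ᵢ (H⁽¹⁾_{aᵢ+j} - H⁽¹⁾_j)]`
is `≡ 0 (mod p)` if `T < 2(p-1)` and `≡ 1 (mod p)` if `T = 2(p-1)`. -/
theorem stmt4 (p : ℕ) [hp : Fact p.Prime] (hodd : p ≠ 2)
    (n : ℕ) (hn : 1 ≤ n) (a : Fin n → ℕ) (ha : ∀ i, 0 < a i)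
    (hT : ∑ i, a i ≤ 2 * (p - 1))
    (S : ℚ)
    (hS : S = ∑ j ∈ Finset.range p,
        (∏ i, risingFacQ ((j : ℚ) + 1) (a i)) *
          (1 + (j : ℚ) * ∑ i, (harmonic' 1 (a i + j) - harmonic' 1 j))) :
    (∑ i, a i < 2 * (p - 1) → ∃ z : ℤ_[p], (S : ℚ_[p]) = (p : ℚ_[p]) * (z : ℚ_[p])) ∧
    (∑ i, a i = 2 * (p - 1) → ∃ z : ℤ_[p], (S : ℚ_[p]) - 1 = (p : ℚ_[p]) * (z : ℚ_[p])) :=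
  stmt4_general p (hp := hp) n a S hS
end

section
/- Let m and n be positive integers with m ≥ n. Then, as an identity of rational numbers, Σ_{k=0}^{n} C(m+k, k) · C(m, k) · C(n+k, k) · C(n, k) · [ 1 + k·( H^{(1)}_{m+k} + H^{(1)}_{m−k} + H^{(1)}_{n+k} + H^{(1)}_{n−k} − 4·H^{(1)}_k ) ] + Σ_{k=n+1}^{m} (−1)^{k−n} · C(m+k, k) · C(m, k) · C(n+k, k) / C(k−1, n) = (−1)^{m+n}. -/
open Polynomial Finset

namespace St6
set_option maxHeartbeats 1000000

-- generic polynomial evaluation lemmas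
lemma evalP (s : Finset ℕ) (f : ℕ → ℚ) (c : ℚ) :
    eval c (∏ j ∈ s, (X - C (f j))) = ∏ j ∈ s, (c - f j) := by
  simp [eval_prod]

lemma evalD (s : Finset ℕ) (f : ℕ → ℚ) (c : ℚ) :
    eval c (derivative (∏ j ∈ s, (X - C (f j)))) = ∑ i ∈ s, ∏ j ∈ s.erase i, (c - f j) := by
  induction s using Finset.induction with
  | empty => simp
  | @insert a s ha ih =>
      rw [Finset.prod_insert ha, derivative_mul, derivative_X_sub_C, one_mul, eval_add,
        eval_mul, eval_sub, eval_X, eval_C, ih, Finset.sum_insert ha,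
        Finset.erase_insert ha, evalP]
      rw [Finset.mul_sum]
      congr 1
      refine Finset.sum_congr rfl fun i hi => ?_
      rw [Finset.erase_insert_of_ne (by rintro rfl; exact ha hi),
        Finset.prod_insert (fun h => ha (Finset.mem_of_mem_erase h))]

lemma sum_prod_erase (s : Finset ℕ) (g : ℕ → ℚ) (h : ∀ i ∈ s, g i ≠ 0) :
    ∑ i ∈ s, ∏ j ∈ s.erase i, g j = (∏ j ∈ s, g j) * ∑ i ∈ s, (g i)⁻¹ := by
  rw [Finset.mul_sum]
  refine Finset.sum_congr rfl fun i hi => ?_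
  rw [← Finset.mul_prod_erase s g hi]
  field_simp [h i hi]

lemma monicP (s : Finset ℕ) (f : ℕ → ℚ) : (∏ j ∈ s, (X - C (f j))).Monic :=
  monic_prod_of_monic _ _ fun j _ => monic_X_sub_C _

lemma degP (s : Finset ℕ) (f : ℕ → ℚ) : (∏ j ∈ s, (X - C (f j))).natDegree = s.card := by
  rw [natDegree_prod _ _ fun j _ => (monic_X_sub_C (f j)).ne_zero]
  simp

lemma derivRootMul (u v : ℚ[X]) (c : ℚ) (hu : u.IsRoot c) (hv : v.IsRoot c) :
    (derivative (u * v)).IsRoot c := by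
  simp only [IsRoot, derivative_mul, eval_add, eval_mul] at *
  rw [hu, hv]; ring

lemma sq_dvd_of_root (p : ℚ[X]) (c : ℚ) (h0 : p.IsRoot c) (h1 : (derivative p).IsRoot c) :
    (X - C c) ^ 2 ∣ p := by
  obtain ⟨q, hq⟩ := (dvd_iff_isRoot).2 h0
  have hq1 : q.IsRoot c := by
    have := h1
    rw [hq, derivative_mul, derivative_X_sub_C, one_mul] at this
    simpa [IsRoot] using this
  obtain ⟨q2, hq2⟩ := (dvd_iff_isRoot).2 hq1
  exact ⟨q2, by rw [hq, hq2]; ring⟩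



lemma harm_one (N : ℕ) : harmonic' 1 N = ∑ j ∈ Icc 1 N, ((j : ℚ))⁻¹ := by
  simp [harmonic', one_div]

lemma harm_succ (N : ℕ) : harmonic' 1 (N + 1) = harmonic' 1 N + ((N : ℚ) + 1)⁻¹ := by
  rw [harm_one, harm_one, Finset.sum_Icc_succ_top (by omega)]
  push_cast; ring

lemma fact_ne (x : ℕ) : (x.factorial : ℚ) ≠ 0 := by
  exact_mod_cast x.factorial_ne_zero

-- ∏_{j=1}^{M} (k+j) = (M+k)!/k!
lemma prodIccAdd (k M : ℕ) : ∏ j ∈ Icc 1 M, ((k : ℚ) + j) = (M + k).factorial / k.factorial := by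
  induction M with
  | zero => simp; exact (div_self (fact_ne k)).symm
  | succ M ih =>
      rw [Finset.prod_Icc_succ_top (by omega), ih]
      rw [show M + 1 + k = (M + k) + 1 by omega]
      rw [Nat.factorial_succ]
      push_cast
      field_simp
      ring

-- ∏_{j=0}^{K-1} (x-j) = x!/(x-K)!  (K ≤ x)
lemma prodRangeSub (x K : ℕ) (h : K ≤ x) :
    ∏ j ∈ range K, ((x : ℚ) - j) = x.factorial / (x - K).factorial := by
  induction K with
  | zero => simp; exact (div_self (fact_ne x)).symm
  | succ K ih =>
      rw [Finset.prod_range_succ, ih (by omega)]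
      have h2 : ((x : ℚ) - K) = ((x - (K+1) : ℕ) : ℚ) + 1 := by
        rw [Nat.cast_sub (by omega)]; push_cast; ring
      have h3 : ((x - K).factorial : ℚ) = ((x - (K+1)).factorial : ℚ) * (((x - (K+1) : ℕ) : ℚ) + 1) := by
        rw [show x - K = (x - (K + 1)) + 1 by omega, Nat.factorial_succ]
        push_cast; ring
      have h4 : (((x - (K+1) : ℕ) : ℚ) + 1) ≠ 0 := by positivity
      rw [h2, h3, div_mul_eq_mul_div, mul_div_mul_right _ _ h4]

-- ∏_{j=k+1}^{M} (k-j) = (-1)^M (-1)^k (M-k)!  (k ≤ M)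
lemma prodIccSubNeg (k M : ℕ) (h : k ≤ M) :
    ∏ j ∈ Icc (k+1) M, ((k : ℚ) - j) = (-1)^M * (-1)^k * (M - k).factorial := by
  induction M with
  | zero =>
      have : k = 0 := by omega
      subst this; simp
  | succ M ih =>
      rcases Nat.eq_or_lt_of_le h with h'|h'
      · subst h'
        rw [Finset.Icc_eq_empty (by omega), Finset.prod_empty, Nat.sub_self]
        simp only [Nat.factorial_zero, Nat.cast_one, mul_one]
        rw [← mul_pow]
        norm_num
      · have hk : k ≤ M := by omega
        rw [Finset.prod_Icc_succ_top (by omega), ih hk]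
        have h1 : M + 1 - k = (M - k) + 1 := by omega
        rw [h1, Nat.factorial_succ]
        have h2 : ((k:ℚ) - (M+1:ℕ)) = -(((M - k : ℕ) : ℚ) + 1) := by
          rw [Nat.cast_sub hk]; push_cast; ring
        push_cast [h2, Nat.cast_sub hk]
        ring

lemma eraseEq (M k : ℕ) (h : k ≤ M) :
    (range (M+1)).erase k = range k ∪ Icc (k+1) M := by
  ext j
  simp only [Finset.mem_erase, Finset.mem_range, Finset.mem_union, Finset.mem_Icc]
  omega

lemma eraseDisj (M k : ℕ) : Disjoint (range k) (Icc (k+1) M) := by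
  rw [Finset.disjoint_left]
  intro j hj hj'
  simp only [Finset.mem_range] at hj
  simp only [Finset.mem_Icc] at hj'
  omega

-- ∏_{j∈range(M+1)\{k}} (k-j) = (-1)^M (-1)^k k! (M-k)!
lemma prodErase (M k : ℕ) (h : k ≤ M) :
    ∏ j ∈ (range (M+1)).erase k, ((k : ℚ) - j) =
      (-1)^M * (-1)^k * k.factorial * (M - k).factorial := by
  rw [eraseEq M k h, Finset.prod_union (eraseDisj M k), prodRangeSub k k le_rfl,
    prodIccSubNeg k M h]
  simp [Nat.sub_self]
  ring

-- harmonic sums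
lemma sumIccAddInv (k M : ℕ) :
    ∑ i ∈ Icc 1 M, ((k : ℚ) + i)⁻¹ = harmonic' 1 (M + k) - harmonic' 1 k := by
  induction M with
  | zero => simp
  | succ M ih =>
      rw [Finset.sum_Icc_succ_top (by omega), ih, show M + 1 + k = (M + k) + 1 by omega,
        harm_succ]
      push_cast
      ring

lemma sumRangeSubInv (x K : ℕ) (h : K ≤ x) :
    ∑ i ∈ range K, ((x : ℚ) - i)⁻¹ = harmonic' 1 x - harmonic' 1 (x - K) := by
  induction K with
  | zero => simp
  | succ K ih =>
      rw [Finset.sum_range_succ, ih (by omega)]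
      have h1 : x - K = (x - (K + 1)) + 1 := by omega
      rw [h1, harm_succ]
      have h2 : ((x : ℚ) - K) = ((x - (K+1) : ℕ) : ℚ) + 1 := by
        rw [Nat.cast_sub (by omega)]; push_cast; ring
      rw [h2]
      ring

lemma sumIccSubInv (k M : ℕ) (h : k ≤ M) :
    ∑ i ∈ Icc (k+1) M, ((k : ℚ) - i)⁻¹ = -harmonic' 1 (M - k) := by
  induction M with
  | zero =>
      have : k = 0 := by omega
      subst this; simp [harmonic']
  | succ M ih =>
      rcases Nat.eq_or_lt_of_le h with h'|h'
      · subst h'; simp [harmonic']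
      · have hk : k ≤ M := by omega
        rw [Finset.sum_Icc_succ_top (by omega), ih hk,
          show M + 1 - k = (M - k) + 1 by omega, harm_succ]
        have h2 : ((k:ℚ) - (M+1:ℕ)) = -(((M - k : ℕ) : ℚ) + 1) := by
          rw [Nat.cast_sub hk]; push_cast; ring
        rw [h2, inv_neg]
        ring

lemma sumEraseInv (M k : ℕ) (h : k ≤ M) :
    ∑ i ∈ (range (M+1)).erase k, ((k : ℚ) - i)⁻¹ = harmonic' 1 k - harmonic' 1 (M - k) := by
  rw [eraseEq M k h, Finset.sum_union (eraseDisj M k), sumRangeSubInv k k le_rfl,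
    sumIccSubInv k M h]
  simp only [Nat.sub_self]
  rw [show harmonic' 1 0 = 0 by simp [harmonic']]
  ring

-- sign helper
lemma negOnePowSub (a b : ℕ) (h : b ≤ a) : ((-1 : ℚ))^(a - b) = (-1)^a * (-1)^b := by
  have : a = (a - b) + b := by omega
  nth_rewrite 2 [this]
  rw [pow_add, mul_assoc, ← pow_add]
  have : b + b = 2 * b := by omega
  rw [this, pow_mul]
  norm_num



noncomputable def Pm (m k : ℕ) : ℚ[X] := ∏ j ∈ (range (m+1)).erase k, (X - C (j:ℚ))
noncomputable def DD (n : ℕ) : ℚ[X] := ∏ j ∈ range (n+1), (X - C (j:ℚ))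
noncomputable def FF (m : ℕ) : ℚ[X] := ∏ j ∈ Icc 1 m, (X - C (-(j:ℚ)))
noncomputable def NP (m n : ℕ) : ℚ[X] := X * (FF m * FF n)
noncomputable def Q1 (m n k : ℕ) : ℚ[X] := Pm m k * DD n
noncomputable def Q2 (m n k : ℕ) : ℚ[X] := Pm m k * Pm n k

def chq (m n k : ℕ) : ℚ :=
  ((m + k).choose k : ℚ) * (m.choose k : ℚ) * ((n + k).choose k : ℚ) * (n.choose k : ℚ)
def t1 (m n k : ℕ) : ℚ :=
  chq m n k * (1 + (k : ℚ) * (harmonic' 1 (m + k) + harmonic' 1 (m - k) + harmonic' 1 (n + k)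
    + harmonic' 1 (n - k) - 4 * harmonic' 1 k))
def t2 (m n k : ℕ) : ℚ :=
  (-1 : ℚ) ^ (k - n) * (((m + k).choose k : ℚ) * (m.choose k : ℚ) * ((n + k).choose k : ℚ)) /
    (((k - 1).choose n : ℚ))
def tm (m n k : ℕ) : ℚ := if k ≤ n then t1 m n k else t2 m n k
def aa (m n k : ℕ) : ℚ := (-1 : ℚ) ^ (m + n) * k * chq m n k
def rr (m n k : ℕ) : ℚ := (-1 : ℚ) ^ (m + n) * tm m n k

noncomputable def EE (m n : ℕ) : ℚ[X] :=
  NP m n - ∑ k ∈ range (n+1), C (aa m n k) * Q2 m n k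
    - ∑ k ∈ range (m+1), C (rr m n k) * Q1 m n k




lemma Pm_monic (m k : ℕ) : (Pm m k).Monic := monicP _ _
lemma DD_monic (n : ℕ) : (DD n).Monic := monicP _ _
lemma FF_monic (m : ℕ) : (FF m).Monic := monicP _ _
lemma NP_monic (m n : ℕ) : (NP m n).Monic :=
  monic_X.mul ((FF_monic m).mul (FF_monic n))

lemma Pm_deg (m k : ℕ) (h : k ≤ m) : (Pm m k).natDegree = m := by
  rw [Pm, degP, Finset.card_erase_of_mem (by simp; omega), Finset.card_range]
  omega

lemma DD_deg (n : ℕ) : (DD n).natDegree = n + 1 := by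
  rw [DD, degP, Finset.card_range]

lemma FF_deg (m : ℕ) : (FF m).natDegree = m := by
  rw [FF, degP, Nat.card_Icc]; omega

lemma NP_deg (m n : ℕ) : (NP m n).natDegree = m + n + 1 := by
  rw [NP, monic_X.natDegree_mul ((FF_monic m).mul (FF_monic n)),
    (FF_monic m).natDegree_mul (FF_monic n), FF_deg, FF_deg, natDegree_X]
  omega

lemma Q1_monic (m n k : ℕ) : (Q1 m n k).Monic := (Pm_monic m k).mul (DD_monic n)
lemma Q2_monic (m n k : ℕ) : (Q2 m n k).Monic := (Pm_monic m k).mul (Pm_monic n k)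

lemma Q1_deg (m n k : ℕ) (h : k ≤ m) : (Q1 m n k).natDegree = m + n + 1 := by
  rw [Q1, (Pm_monic m k).natDegree_mul (DD_monic n), Pm_deg m k h, DD_deg]
  omega

lemma Q2_deg (m n k : ℕ) (hm : k ≤ m) (hn : k ≤ n) : (Q2 m n k).natDegree = m + n := by
  rw [Q2, (Pm_monic m k).natDegree_mul (Pm_monic n k), Pm_deg m k hm, Pm_deg n k hn]

lemma EE_deg (m n : ℕ) (hmn : n ≤ m) : (EE m n).natDegree ≤ m + n + 1 := by
  have h2 : (∑ k ∈ range (n+1), C (aa m n k) * Q2 m n k).natDegree ≤ m + n + 1 := by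
    refine Polynomial.natDegree_sum_le_of_forall_le _ _ fun k hk => ?_
    refine le_trans (natDegree_C_mul_le _ _) ?_
    rw [Q2_deg m n k (by simp at hk; omega) (by simp at hk; omega)]
    omega
  have h1 : (∑ k ∈ range (m+1), C (rr m n k) * Q1 m n k).natDegree ≤ m + n + 1 := by
    refine Polynomial.natDegree_sum_le_of_forall_le _ _ fun k hk => ?_
    refine le_trans (natDegree_C_mul_le _ _) ?_
    rw [Q1_deg m n k (by simp at hk; omega)]
  refine le_trans (natDegree_sub_le _ _) (max_le (le_trans (natDegree_sub_le _ _)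
    (max_le (le_of_eq (NP_deg m n)) h2)) h1)



lemma Q1_def (m n k : ℕ) : Q1 m n k = Pm m k * DD n := rfl
lemma Q2_def (m n k : ℕ) : Q2 m n k = Pm m k * Pm n k := rfl
lemma NP_def (m n : ℕ) : NP m n = X * (FF m * FF n) := rfl

lemma castNe (k i : ℕ) (h : i ≠ k) : ((k : ℚ) - i) ≠ 0 :=
  sub_ne_zero.mpr (fun hh => h (by exact_mod_cast hh.symm))

lemma evalPm_zero (M j k : ℕ) (hk : k ≤ M) (hjk : k ≠ j) : eval (k : ℚ) (Pm M j) = 0 := by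
  rw [Pm, evalP]
  exact Finset.prod_eq_zero (Finset.mem_erase.mpr ⟨hjk, by simp; omega⟩) (by simp)

lemma evalDD_zero (n k : ℕ) (hk : k ≤ n) : eval (k : ℚ) (DD n) = 0 := by
  rw [DD, evalP]
  exact Finset.prod_eq_zero (by simp; omega : k ∈ range (n+1)) (by simp)

lemma evalPm_val (M k : ℕ) (hk : k ≤ M) :
    eval (k : ℚ) (Pm M k) = (-1)^M * (-1)^k * k.factorial * (M - k).factorial := by
  rw [Pm, evalP, prodErase M k hk]

lemma evalFF_val (M k : ℕ) : eval (k : ℚ) (FF M) = (M + k).factorial / k.factorial := by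
  rw [FF, evalP]
  simp only [sub_neg_eq_add]
  exact prodIccAdd k M

lemma evalDD_val (n k : ℕ) (h : n < k) :
    eval (k : ℚ) (DD n) = k.factorial / (k - (n+1)).factorial := by
  rw [DD, evalP]
  exact prodRangeSub k (n+1) (by omega)

lemma evalDFF (M k : ℕ) :
    eval (k : ℚ) (derivative (FF M)) =
      ((M + k).factorial / k.factorial) * (harmonic' 1 (M + k) - harmonic' 1 k) := by
  rw [FF, evalD]
  simp only [sub_neg_eq_add]
  rw [sum_prod_erase _ _ (fun i hi => ?_), prodIccAdd, sumIccAddInv]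
  have h1 : (1 : ℚ) ≤ (i : ℚ) := by
    simp only [Finset.mem_Icc] at hi
    exact_mod_cast hi.1
  have : (0:ℚ) < (k : ℚ) + i := by
    have : (0:ℚ) ≤ (k:ℚ) := Nat.cast_nonneg k
    linarith
  exact ne_of_gt this

lemma evalDPm (M k : ℕ) (h : k ≤ M) :
    eval (k : ℚ) (derivative (Pm M k)) =
      ((-1)^M * (-1)^k * k.factorial * (M - k).factorial) *
        (harmonic' 1 k - harmonic' 1 (M - k)) := by
  rw [Pm, evalD, sum_prod_erase _ _ (fun i hi => castNe k i (Finset.mem_erase.mp hi).1),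
    prodErase M k h, sumEraseInv M k h]

lemma evalDDD (n k : ℕ) (hk : k ≤ n) :
    eval (k : ℚ) (derivative (DD n)) = (-1)^n * (-1)^k * k.factorial * (n - k).factorial := by
  rw [DD, evalD]
  have hs := Finset.sum_eq_single_of_mem
    (f := fun i => ∏ j ∈ (range (n+1)).erase i, ((k:ℚ) - j)) k
    (by simp; omega : k ∈ range (n+1))
    (fun j _ hjk => Finset.prod_eq_zero
      (Finset.mem_erase.mpr ⟨Ne.symm hjk, by simp; omega⟩) (by simp))
  rw [hs]
  exact prodErase n k hk

lemma chooseAdd (M k : ℕ) :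
    (((M + k).choose k : ℕ) : ℚ) = (M + k).factorial / (k.factorial * M.factorial) := by
  rw [Nat.cast_choose ℚ (by omega : k ≤ M + k), show M + k - k = M by omega]

lemma chooseSub (M k : ℕ) (h : k ≤ M) :
    ((M.choose k : ℕ) : ℚ) = M.factorial / (k.factorial * (M - k).factorial) :=
  Nat.cast_choose ℚ h

lemma chooseK1 (n k : ℕ) (h : n < k) :
    (((k - 1).choose n : ℕ) : ℚ) = (k-1).factorial / (n.factorial * (k - (n+1)).factorial) := by
  rw [Nat.cast_choose ℚ (by omega : n ≤ k - 1), show k - 1 - n = k - (n+1) by omega]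

lemma fact_pred (k : ℕ) (h : 0 < k) : (k.factorial : ℚ) = (k : ℚ) * (k-1).factorial := by
  have h1 : k = (k-1) + 1 := by omega
  rw [h1, Nat.factorial_succ]
  push_cast [Nat.cast_sub (by omega : 1 ≤ k)]
  ring

lemma root_EE (m n : ℕ) (hn : 0 < n) (hmn : n ≤ m) (k : ℕ) (hk : k ≤ m) :
    (EE m n).IsRoot (k : ℚ) := by
  simp only [EE, IsRoot, eval_sub, eval_finset_sum, eval_mul, eval_C]
  by_cases hkn : k ≤ n
  · have h2 : ∑ j ∈ range (n+1), aa m n j * eval (k:ℚ) (Q2 m n j)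
        = aa m n k * ((((-1:ℚ))^m * (-1)^k * k.factorial * (m-k).factorial) *
            (((-1:ℚ))^n * (-1)^k * k.factorial * (n-k).factorial)) := by
      have hs := Finset.sum_eq_single_of_mem
        (f := fun j => aa m n j * eval (k:ℚ) (Q2 m n j)) k
        (by simp; omega : k ∈ range (n+1))
        (fun j _ hjk => by
          show aa m n j * eval (k:ℚ) (Q2 m n j) = 0
          rw [Q2_def, eval_mul, evalPm_zero m j k hk (Ne.symm hjk), zero_mul, mul_zero])
      rw [hs]
      show aa m n k * eval (k:ℚ) (Q2 m n k) = _
      rw [Q2_def, eval_mul, evalPm_val m k hk, evalPm_val n k hkn]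
    have h1 : ∑ j ∈ range (m+1), rr m n j * eval (k:ℚ) (Q1 m n j) = 0 := by
      refine Finset.sum_eq_zero fun j _ => ?_
      rw [Q1_def, eval_mul, evalDD_zero n k hkn, mul_zero, mul_zero]
    rw [h2, h1, sub_zero, NP_def, eval_mul, eval_mul, eval_X, evalFF_val m k, evalFF_val n k]
    rw [aa, chq, chooseAdd m k, chooseSub m k hk, chooseAdd n k, chooseSub n k hkn,
      pow_add]
    field_simp [fact_ne]
    rcases neg_one_pow_eq_or ℚ m with hA | hA <;>
      rcases neg_one_pow_eq_or ℚ n with hB | hB <;>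
        rcases neg_one_pow_eq_or ℚ k with hK | hK <;>
          simp only [hA, hB, hK] <;> ring
  · push_neg at hkn
    have hk0 : ((k:ℚ)) ≠ 0 := Nat.cast_ne_zero.mpr (by omega)
    have h2 : ∑ j ∈ range (n+1), aa m n j * eval (k:ℚ) (Q2 m n j) = 0 := by
      refine Finset.sum_eq_zero fun j hj => ?_
      rw [Q2_def, eval_mul, evalPm_zero m j k hk (by simp at hj; omega), zero_mul, mul_zero]
    have h1 : ∑ j ∈ range (m+1), rr m n j * eval (k:ℚ) (Q1 m n j)
        = rr m n k * ((((-1:ℚ))^m * (-1)^k * k.factorial * (m-k).factorial) *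
            ((k.factorial : ℚ) / (k-(n+1)).factorial)) := by
      have hs := Finset.sum_eq_single_of_mem
        (f := fun j => rr m n j * eval (k:ℚ) (Q1 m n j)) k
        (by simp; omega : k ∈ range (m+1))
        (fun j _ hjk => by
          show rr m n j * eval (k:ℚ) (Q1 m n j) = 0
          rw [Q1_def, eval_mul, evalPm_zero m j k hk (Ne.symm hjk), zero_mul, mul_zero])
      rw [hs]
      show rr m n k * eval (k:ℚ) (Q1 m n k) = _
      rw [Q1_def, eval_mul, evalPm_val m k hk, evalDD_val n k hkn]
    rw [h2, h1, sub_zero, NP_def, eval_mul, eval_mul, eval_X, evalFF_val m k, evalFF_val n k]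
    rw [rr, tm, if_neg (by omega), t2, chooseAdd m k, chooseSub m k hk, chooseAdd n k,
      chooseK1 n k hkn, negOnePowSub k n (by omega), pow_add, fact_pred k (by omega)]
    field_simp [fact_ne]
    rcases neg_one_pow_eq_or ℚ m with hA | hA <;>
      rcases neg_one_pow_eq_or ℚ n with hB | hB <;>
        rcases neg_one_pow_eq_or ℚ k with hK | hK <;>
          simp only [hA, hB, hK] <;> ring

lemma root_dEE (m n : ℕ) (hn : 0 < n) (hmn : n ≤ m) (k : ℕ) (hk : k ≤ n) :
    (derivative (EE m n)).IsRoot (k : ℚ) := by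
  have hkm : k ≤ m := le_trans hk hmn
  simp only [EE, IsRoot, derivative_sub, derivative_sum, derivative_C_mul,
    eval_sub, eval_finset_sum, eval_mul, eval_C]
  have h2 : ∑ j ∈ range (n+1), aa m n j * eval (k:ℚ) (derivative (Q2 m n j))
      = aa m n k *
        (((-1:ℚ))^m * (-1)^k * k.factorial * (m-k).factorial *
            (harmonic' 1 k - harmonic' 1 (m-k)) *
          (((-1:ℚ))^n * (-1)^k * k.factorial * (n-k).factorial)
        + ((-1:ℚ))^m * (-1)^k * k.factorial * (m-k).factorial *
          (((-1:ℚ))^n * (-1)^k * k.factorial * (n-k).factorial *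
            (harmonic' 1 k - harmonic' 1 (n-k)))) := by
    have hs := Finset.sum_eq_single_of_mem
      (f := fun j => aa m n j * eval (k:ℚ) (derivative (Q2 m n j))) k
      (by simp; omega : k ∈ range (n+1))
      (fun j _ hjk => by
        show aa m n j * eval (k:ℚ) (derivative (Q2 m n j)) = 0
        rw [Q2_def, derivRootMul _ _ _ (evalPm_zero m j k hkm (Ne.symm hjk))
          (evalPm_zero n j k hk (Ne.symm hjk)), mul_zero])
    rw [hs]
    show aa m n k * eval (k:ℚ) (derivative (Q2 m n k)) = _
    rw [Q2_def, derivative_mul, eval_add, eval_mul, eval_mul,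
      evalDPm m k hkm, evalPm_val n k hk, evalPm_val m k hkm, evalDPm n k hk]
  have h1 : ∑ j ∈ range (m+1), rr m n j * eval (k:ℚ) (derivative (Q1 m n j))
      = rr m n k * (((-1:ℚ))^m * (-1)^k * k.factorial * (m-k).factorial *
          (((-1:ℚ))^n * (-1)^k * k.factorial * (n-k).factorial)) := by
    have hs := Finset.sum_eq_single_of_mem
      (f := fun j => rr m n j * eval (k:ℚ) (derivative (Q1 m n j))) k
      (by simp; omega : k ∈ range (m+1))
      (fun j _ hjk => by
        show rr m n j * eval (k:ℚ) (derivative (Q1 m n j)) = 0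
        rw [Q1_def, derivRootMul _ _ _ (evalPm_zero m j k hkm (Ne.symm hjk))
          (evalDD_zero n k hk), mul_zero])
    rw [hs]
    show rr m n k * eval (k:ℚ) (derivative (Q1 m n k)) = _
    rw [Q1_def, derivative_mul, eval_add, eval_mul, eval_mul,
      evalDD_zero n k hk, mul_zero, zero_add, evalPm_val m k hkm, evalDDD n k hk]
  rw [h2, h1, NP_def, derivative_mul, derivative_X, one_mul, derivative_mul,
    eval_add, eval_mul, eval_mul, eval_add, eval_mul, eval_mul, eval_X,
    evalFF_val m k, evalFF_val n k, evalDFF m k, evalDFF n k]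
  rw [aa, rr, tm, if_pos hk, t1, chq, chooseAdd m k, chooseSub m k hkm, chooseAdd n k,
    chooseSub n k hk, pow_add]
  field_simp [fact_ne]
  rcases neg_one_pow_eq_or ℚ m with hA | hA <;>
    rcases neg_one_pow_eq_or ℚ n with hB | hB <;>
      rcases neg_one_pow_eq_or ℚ k with hK | hK <;>
        simp only [hA, hB, hK] <;> ring

lemma EE_eq_zero (m n : ℕ) (hn : 0 < n) (hmn : n ≤ m) : EE m n = 0 := by
  by_contra hne
  set P : ℚ[X] := ∏ j ∈ range (m+1), (X - C (j:ℚ)) ^ (if j ≤ n then 2 else 1) with hP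
  have hdvd : P ∣ EE m n := by
    refine Finset.prod_dvd_of_coprime ?_ ?_
    · intro i hi j hj hij
      have := (Polynomial.pairwise_coprime_X_sub_C (Nat.cast_injective (R := ℚ))) hij
      exact this.pow
    · intro j hj
      simp only [Finset.mem_range] at hj
      by_cases hjn : j ≤ n
      · rw [if_pos hjn]
        exact sq_dvd_of_root _ _ (root_EE m n hn hmn j (by omega))
          (root_dEE m n hn hmn j hjn)
      · rw [if_neg hjn, pow_one, dvd_iff_isRoot]
        exact root_EE m n hn hmn j (by omega)
  have hPdeg : P.natDegree = m + n + 2 := by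
    rw [hP, natDegree_prod _ _ fun j _ => pow_ne_zero _ (X_sub_C_ne_zero _)]
    have : ∀ j ∈ range (m+1), ((X - C (j:ℚ)) ^ (if j ≤ n then 2 else 1)).natDegree
        = (if j ≤ n then 2 else 1) := by
      intro j _
      rw [natDegree_pow, natDegree_X_sub_C, mul_one]
    rw [Finset.sum_congr rfl this]
    rw [Finset.range_eq_Ico]
    rw [← Finset.sum_Ico_consecutive _ (by omega : 0 ≤ n+1) (by omega : n+1 ≤ m+1)]
    rw [Finset.sum_congr rfl (fun j hj => if_pos (by simp at hj; omega)),
      Finset.sum_congr rfl (g := fun _ => 1) (fun j hj => if_neg (by simp at hj; omega))]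
    simp [Nat.card_Ico]
    omega
  have := Polynomial.natDegree_le_of_dvd hdvd hne
  have := EE_deg m n hmn
  omega

lemma sum_rr (m n : ℕ) (hn : 0 < n) (hmn : n ≤ m) :
    ∑ k ∈ range (m+1), rr m n k = 1 := by
  have h0 := EE_eq_zero m n hn hmn
  have hc := congrArg (fun p : ℚ[X] => p.coeff (m + n + 1)) h0
  simp only [EE, coeff_sub, coeff_zero, Polynomial.finset_sum_coeff, coeff_C_mul] at hc
  have hN : (NP m n).coeff (m + n + 1) = 1 := by
    have := (NP_monic m n).coeff_natDegree
    rwa [NP_deg m n] at this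
  have hQ2 : ∀ k ∈ range (n+1), aa m n k * (Q2 m n k).coeff (m + n + 1) = 0 := by
    intro k hk
    rw [coeff_eq_zero_of_natDegree_lt, mul_zero]
    rw [Q2_deg m n k (by simp at hk; omega) (by simp at hk; omega)]
    omega
  have hQ1 : ∀ k ∈ range (m+1), rr m n k * (Q1 m n k).coeff (m + n + 1) = rr m n k := by
    intro k hk
    have := (Q1_monic m n k).coeff_natDegree
    rw [Q1_deg m n k (by simp at hk; omega)] at this
    rw [this, mul_one]
  rw [hN, Finset.sum_congr rfl hQ2, Finset.sum_congr rfl hQ1] at hc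
  simp at hc
  linarith [hc]

lemma sum_tm (m n : ℕ) (hn : 0 < n) (hmn : n ≤ m) :
    ∑ k ∈ range (m+1), tm m n k = (-1 : ℚ) ^ (m + n) := by
  have h := sum_rr m n hn hmn
  have hsq : (-1 : ℚ) ^ (m+n) * (-1 : ℚ) ^ (m+n) = 1 := by
    rw [← pow_add, show m+n+(m+n) = 2*(m+n) by omega, pow_mul]
    norm_num
  calc ∑ k ∈ range (m+1), tm m n k
      = (-1 : ℚ) ^ (m+n) * ∑ k ∈ range (m+1), rr m n k := by
        rw [Finset.mul_sum]
        refine Finset.sum_congr rfl fun k _ => ?_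
        rw [rr, ← mul_assoc, hsq, one_mul]
    _ = (-1 : ℚ) ^ (m+n) := by rw [h, mul_one]


end St6


/-- Theorem 3.12 (binomial coefficient–harmonic sum identity): for positive integers
`m ≥ n`,
`∑_{k=0}^{n} C(m+k,k) C(m,k) C(n+k,k) C(n,k)
   [1 + k (H⁽¹⁾_{m+k} + H⁽¹⁾_{m-k} + H⁽¹⁾_{n+k} + H⁽¹⁾_{n-k} - 4 H⁽¹⁾_k)]
 + ∑_{k=n+1}^{m} (-1)^{k-n} C(m+k,k) C(m,k) C(n+k,k) / C(k-1,n) = (-1)^{m+n}`. -/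
theorem stmt6 (m n : ℕ) (hn : 0 < n) (hmn : n ≤ m) :
    ∑ k ∈ Finset.range (n + 1),
        (((m + k).choose k : ℚ) * (m.choose k : ℚ) * ((n + k).choose k : ℚ) *
            (n.choose k : ℚ)) *
          (1 + (k : ℚ) * (harmonic' 1 (m + k) + harmonic' 1 (m - k) + harmonic' 1 (n + k)
              + harmonic' 1 (n - k) - 4 * harmonic' 1 k))
      + ∑ k ∈ Finset.Icc (n + 1) m,
          (-1 : ℚ) ^ (k - n) *
            (((m + k).choose k : ℚ) * (m.choose k : ℚ) * ((n + k).choose k : ℚ)) /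
              (((k - 1).choose n : ℚ))
      = (-1 : ℚ) ^ (m + n) := by
  have h := St6.sum_tm m n hn hmn
  rw [Finset.range_eq_Ico, ← Finset.sum_Ico_consecutive _ (by omega : 0 ≤ n+1)
    (by omega : n+1 ≤ m+1)] at h
  rw [Finset.sum_congr rfl (g := fun k => St6.t1 m n k)
      (fun k hk => by rw [St6.tm, if_pos (by simp at hk; omega)]),
    Finset.sum_congr (Finset.Ico_add_one_right_eq_Icc (n+1) m) (g := fun k => St6.t2 m n k)
      (fun k hk => by rw [St6.tm, if_neg (by simp at hk; omega)])] at h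
  simp only [St6.t1, St6.t2, St6.chq] at h
  rw [← Finset.range_eq_Ico] at h
  exact h
end
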